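/- The binary-refinable tree (T,σ) of a binary-explainable BMG (G,σ) satisfies r(T) = cl(R^bin(G,σ)), i.e., the set of triples displayed by the BRT is exactly the closure of the extended triple set. -/

import Mathlib

/-- A rooted phylogenetic tree with leaf set `V`, encoded by its hierarchy of clusters
(the cluster of a vertex is the set of leaves below it; inner vertices of a phylogenetic
tree have at least two children, so vertices correspond bijectively to clusters). -/
structure PhyloTree (V : Type*) where
  clusters : Set (Set V)
  nonempty_of_mem : ∀ A ∈ clusters, A.Nonempty
  univ_mem : Set.univ ∈ clusters
  singleton_mem : ∀ v : V, {v} ∈ clusters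
  nested : ∀ A ∈ clusters, ∀ B ∈ clusters, A ⊆ B ∨ B ⊆ A ∨ Disjoint A B

namespace PhyloTree

variable {V : Type*}

/-- The cluster of the last common ancestor of `x` and `y`: the smallest cluster
containing both (the clusters containing `x` and `y` form a chain, so their
intersection is the smallest one). -/
def lca (T : PhyloTree V) (x y : V) : Set V :=
  ⋂₀ {A | A ∈ T.clusters ∧ x ∈ A ∧ y ∈ A}

/-- The rooted triple `xy|z` (on three pairwise distinct leaves) is displayed by `T`:
`lca(x,y) ≺ lca(x,z) = lca(y,z)`. -/
def Displays (T : PhyloTree V) (x y z : V) : Prop :=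
  x ≠ y ∧ x ≠ z ∧ y ≠ z ∧ T.lca x y ⊂ T.lca x z ∧ T.lca x z = T.lca y z

/-- `T` displays every triple of `R`; a triple `(x, y, z)` encodes `xy|z`. -/
def DisplaysSet (T : PhyloTree V) (R : Set (V × V × V)) : Prop :=
  ∀ t ∈ R, T.Displays t.1 t.2.1 t.2.2

/-- `r(T)`, the set of triples displayed by `T`. -/
def triples (T : PhyloTree V) : Set (V × V × V) :=
  {t | T.Displays t.1 t.2.1 t.2.2}

/-- `T` is binary: every inner vertex (cluster with at least two leaves) has exactly
two children, i.e. splits into two disjoint proper subclusters. -/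
def IsBinary (T : PhyloTree V) : Prop :=
  ∀ A ∈ T.clusters, 1 < A.ncard →
    ∃ B ∈ T.clusters, ∃ D ∈ T.clusters,
      Disjoint B D ∧ B ∪ D = A ∧ B ⊂ A ∧ D ⊂ A

/-- `T'` is a refinement of `T`: they have the same leaf set and `T` is obtained from
`T'` by contracting inner edges, i.e. every cluster of `T` is a cluster of `T'`. -/
def Refines (T' T : PhyloTree V) : Prop :=
  T.clusters ⊆ T'.clusters

end PhyloTree

section BMG

variable {V C : Type*}

/-- `y` is a best match of `x` in the leaf-colored tree `(T,σ)`. -/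
def bestMatch (T : PhyloTree V) (σ : V → C) (x y : V) : Prop :=
  σ x ≠ σ y ∧ ∀ y' : V, σ y' = σ y → T.lca x y ⊆ T.lca x y'

/-- The leaf-colored tree `(T,σ)` explains the vertex-colored digraph `(E,σ)`,
i.e. `(E,σ)` is the best match graph of `(T,σ)`. -/
def Explains (T : PhyloTree V) (σ : V → C) (E : V → V → Prop) : Prop :=
  ∀ x y, E x y ↔ bestMatch T σ x y

/-- `(E,σ)` is a best match graph. -/
def IsBMG (E : V → V → Prop) (σ : V → C) : Prop :=
  ∃ T : PhyloTree V, Explains T σ E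

/-- `(E,σ)` is binary-explainable. -/
def BinaryExplainable (E : V → V → Prop) (σ : V → C) : Prop :=
  ∃ T : PhyloTree V, T.IsBinary ∧ Explains T σ E

/-- The informative triples `R(G,σ)`: `(a,b,b')` encodes `ab|b'`. -/
def informativeTriples (E : V → V → Prop) (σ : V → C) : Set (V × V × V) :=
  {t | σ t.1 ≠ σ t.2.1 ∧ σ t.2.1 = σ t.2.2 ∧ E t.1 t.2.1 ∧ ¬ E t.1 t.2.2}

/-- The forbidden triples `F(G,σ)`: `(a,b,b')` encodes `ab|b'`. -/
def forbiddenTriples (E : V → V → Prop) (σ : V → C) : Set (V × V × V) :=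
  {t | σ t.1 ≠ σ t.2.1 ∧ σ t.2.1 = σ t.2.2 ∧ t.2.1 ≠ t.2.2 ∧ E t.1 t.2.1 ∧ E t.1 t.2.2}

/-- The extended triple set `R^bin(G,σ) = R(G,σ) ∪ {bb'|a : ab|b' ∈ F(G,σ)}`. -/
def Rbin (E : V → V → Prop) (σ : V → C) : Set (V × V × V) :=
  informativeTriples E σ ∪ {t | (t.2.2, t.1, t.2.1) ∈ forbiddenTriples E σ}

/-- Properly colored: arcs only between vertices of distinct colors. -/
def ProperlyColored (E : V → V → Prop) (σ : V → C) : Prop :=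
  ∀ x y, E x y → σ x ≠ σ y

/-- sf-colored: properly colored and every vertex has, for each color (of the graph)
different from its own, at least one out-neighbor of that color. -/
def SfColored (E : V → V → Prop) (σ : V → C) : Prop :=
  ProperlyColored E σ ∧ ∀ x y : V, σ y ≠ σ x → ∃ z, E x z ∧ σ z = σ y

/-- A triple set is consistent if some tree displays all of its triples. -/
def Consistent (R : Set (V × V × V)) : Prop :=
  ∃ T : PhyloTree V, T.DisplaysSet R

/-- The closure `cl(R)`: all triples displayed by every tree displaying `R`. -/
def tripleClosure (R : Set (V × V × V)) : Set (V × V × V) :=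
  {t | ∀ T : PhyloTree V, T.DisplaysSet R → T.Displays t.1 t.2.1 t.2.2}

/-- `(T,σ)` is a least resolved tree for `(E,σ)`: it explains `(E,σ)` and no tree
obtained from it by contracting an edge (i.e. by removing a non-root inner cluster)
explains `(E,σ)`. -/
def IsLRT (T : PhyloTree V) (σ : V → C) (E : V → V → Prop) : Prop :=
  Explains T σ E ∧
    ∀ A ∈ T.clusters, A ≠ Set.univ → 1 < A.ncard →
      ∀ T' : PhyloTree V, T'.clusters = T.clusters \ {A} → ¬ Explains T' σ E

end BMG

section Aho

variable {V : Type*}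

/-- Adjacency in the Aho graph `[R,L]`: `x` and `y` are joined whenever `xy|z ∈ R`
for some `z ∈ L` (only triples with all leaves in `L` are taken into account). -/
def ahoAdj (R : Set (V × V × V)) (L : Set V) (x y : V) : Prop :=
  x ∈ L ∧ y ∈ L ∧ ∃ z ∈ L, (x, y, z) ∈ R ∨ (y, x, z) ∈ R

/-- The vertex set of the connected component of `x` in the Aho graph `[R,L]`. -/
def ahoComponent (R : Set (V × V × V)) (L : Set V) (x : V) : Set V :=
  {y | Relation.ReflTransGen (ahoAdj R L) x y}

/-- The clusters of the Aho tree `Aho(R, V)`: the full leaf set, and recursively the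
connected components of the Aho graphs. -/
inductive IsAhoCluster (R : Set (V × V × V)) : Set V → Prop
  | univ : IsAhoCluster R Set.univ
  | component {L : Set V} {x : V} :
      IsAhoCluster R L → x ∈ L → IsAhoCluster R (ahoComponent R L x)

/-- `T` is the Aho tree (`BUILD` tree) of the triple set `R` on the full leaf set. -/
def IsAhoTree (R : Set (V × V × V)) (T : PhyloTree V) : Prop :=
  T.clusters = {A | IsAhoCluster R A}

/-- The union of the leaf sets of the triples in `R`. -/
def tripleLeaves (R : Set (V × V × V)) : Set V :=
  {v | ∃ t ∈ R, v = t.1 ∨ v = t.2.1 ∨ v = t.2.2}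

end Aho

/-!
The Aho tree `T` displays `R = R^bin(G,σ)`: every singleton is a cluster of `T`, so no Aho
cluster `N` with two leaves is connected in `[R,N]`; but for `xy|z ∈ R` with `z ∈ lca_T(x,y)`,
the component of `x` in `[R, lca_T(x,y)]` would be a cluster containing `x` and `y`, i.e. all of
it. Hence `cl(R) ⊆ r(T)`.

Conversely, it suffices that every Aho cluster of `R` is a cluster of every tree `T'` displaying
`R`. Fix a binary tree `Tb` explaining `(G,σ)`; along the recursive construction we show that
every Aho cluster is a cluster of both `Tb` and `T'`. In `Tb`, the two children of
`lca(b,c)` for an edge `bc` of an Aho graph `[R,L]` are always joined inside `[R,L]`, so the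
components of `[R,L]` are clusters of `Tb`. If such a component `K` were not a cluster of `T'`,
take an edge `pq` of `K` with `K ⊆ W = lca_{T'}(p,q)`, a leaf `z ∈ W \ K`, and split the least
cluster of `Tb` containing `K` and `z` into children `C₁ ⊇ K` and `C₂ ∋ z`. The triples of `R`
involving a best match of `z` of the colour of `p` or `q` are displayed by `T'`, which forces
`z` out of `W`.
-/

namespace PhyloTree

variable {V : Type*} (T : PhyloTree V)

lemma subset_or_subset_of_mem {A B : Set V} (hA : A ∈ T.clusters) (hB : B ∈ T.clusters)
    {v : V} (hvA : v ∈ A) (hvB : v ∈ B) : A ⊆ B ∨ B ⊆ A :=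
  (T.nested A hA B hB).imp_right (·.resolve_right (Set.not_disjoint_iff.2 ⟨v, hvA, hvB⟩))

lemma union_subset_of_mem_of_mem {A C₁ C₂ : Set V} (hA : A ∈ T.clusters)
    (hC₁ : C₁ ∈ T.clusters) (hC₂ : C₂ ∈ T.clusters) (hd : Disjoint C₁ C₂) {u v : V}
    (huA : u ∈ A) (hu : u ∈ C₁) (hvA : v ∈ A) (hv : v ∈ C₂) : C₁ ∪ C₂ ⊆ A :=
  Set.union_subset
    ((T.subset_or_subset_of_mem hC₁ hA hu huA).resolve_right
      fun h => Set.disjoint_left.1 hd (h hvA) hv)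
    ((T.subset_or_subset_of_mem hC₂ hA hv hvA).resolve_right
      fun h => Set.disjoint_left.1 hd hu (h huA))

lemma lca_subset {A : Set V} (hA : A ∈ T.clusters) {x y : V} (hx : x ∈ A) (hy : y ∈ A) :
    T.lca x y ⊆ A :=
  Set.sInter_subset_of_mem ⟨hA, hx, hy⟩

section Lca

variable [Finite V]

lemma lca_spec (x y : V) :
    T.lca x y ∈ T.clusters ∧ x ∈ T.lca x y ∧ y ∈ T.lca x y := by
  obtain ⟨M, hM, hmin⟩ := (Set.toFinite {A | A ∈ T.clusters ∧ x ∈ A ∧ y ∈ A}).exists_minimal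
    ⟨Set.univ, T.univ_mem, trivial, trivial⟩
  have hlca : T.lca x y = M :=
    (Set.sInter_subset_of_mem hM).antisymm <| Set.subset_sInter fun A hA =>
      (T.subset_or_subset_of_mem hM.1 hA.1 hM.2.1 hA.2.1).elim id (hmin hA)
  exact hlca ▸ hM

lemma lca_mem_clusters (x y : V) : T.lca x y ∈ T.clusters := (T.lca_spec x y).1

lemma left_mem_lca (x y : V) : x ∈ T.lca x y := (T.lca_spec x y).2.1

lemma right_mem_lca (x y : V) : y ∈ T.lca x y := (T.lca_spec x y).2.2

lemma lca_comm (x y : V) : T.lca x y = T.lca y x :=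
  (T.lca_subset (T.lca_mem_clusters y x) (T.right_mem_lca y x) (T.left_mem_lca y x)).antisymm
    (T.lca_subset (T.lca_mem_clusters x y) (T.right_mem_lca x y) (T.left_mem_lca x y))

lemma lca_eq_lca_of_notMem {A : Set V} (hA : A ∈ T.clusters) {u v w : V} (hu : u ∈ A)
    (hv : v ∈ A) (hw : w ∉ A) : T.lca w u = T.lca w v := by
  have key : ∀ a ∈ A, A ⊆ T.lca w a := fun a ha =>
    (T.subset_or_subset_of_mem hA (T.lca_mem_clusters w a) ha (T.right_mem_lca w a)).resolve_right
      fun h => hw (h (T.left_mem_lca w a))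
  exact (T.lca_subset (T.lca_mem_clusters w v) (T.left_mem_lca w v) (key v hv hu)).antisymm
    (T.lca_subset (T.lca_mem_clusters w u) (T.left_mem_lca w u) (key u hu hv))

lemma displays_iff {x y z : V} : T.Displays x y z ↔ x ≠ y ∧ z ∉ T.lca x y := by
  refine ⟨fun ⟨hxy, _, _, hss, _⟩ => ⟨hxy, fun hz => hss.not_subset
    (T.lca_subset (T.lca_mem_clusters x y) (T.left_mem_lca x y) hz)⟩, fun ⟨hxy, hz⟩ => ?_⟩
  have hxz : T.lca x y ⊆ T.lca x z :=
    (T.subset_or_subset_of_mem (T.lca_mem_clusters x y) (T.lca_mem_clusters x z)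
      (T.left_mem_lca x y) (T.left_mem_lca x z)).resolve_right
      fun h => hz (h (T.right_mem_lca x z))
  have hyz : T.lca y z ⊆ T.lca x z :=
    T.lca_subset (T.lca_mem_clusters x z) (hxz (T.right_mem_lca x y)) (T.right_mem_lca x z)
  have hx : x ∈ T.lca y z :=
    ((T.subset_or_subset_of_mem (T.lca_mem_clusters y z) (T.lca_mem_clusters x y)
      (T.left_mem_lca y z) (T.right_mem_lca x y)).resolve_left
      fun h => hz (h (T.right_mem_lca y z))) (T.left_mem_lca x y)
  refine ⟨hxy, fun h => hz (by rw [← h]; exact T.left_mem_lca x y),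
    fun h => hz (by rw [← h]; exact T.right_mem_lca x y),
    ssubset_of_subset_not_subset hxz fun h => hz (h (T.right_mem_lca x z)), ?_⟩
  exact (T.lca_subset (T.lca_mem_clusters y z) hx (T.right_mem_lca y z)).antisymm hyz

variable {T}

lemma Displays.swap {x y z : V} (h : T.Displays x y z) : T.Displays y x z := by
  obtain ⟨hxy, hz⟩ := T.displays_iff.1 h
  exact T.displays_iff.2 ⟨hxy.symm, by rwa [T.lca_comm]⟩

lemma Displays.mem_of_mem {a b c : V} (h : T.Displays a b c) {A : Set V}
    (hA : A ∈ T.clusters) (ha : a ∈ A) (hc : c ∈ A) : b ∈ A := by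
  rcases T.subset_or_subset_of_mem hA (T.lca_mem_clusters a b) ha (T.left_mem_lca a b) with h' | h'
  · exact absurd (h' hc) (T.displays_iff.1 h).2
  · exact h' (T.right_mem_lca a b)

end Lca

/-- `C₁ ∪ C₂` is a cluster of `T` whose children are the clusters `C₁` and `C₂`. -/
structure IsSplit (C₁ C₂ : Set V) : Prop where
  left_mem : C₁ ∈ T.clusters
  right_mem : C₂ ∈ T.clusters
  disjoint : Disjoint C₁ C₂
  union_mem : C₁ ∪ C₂ ∈ T.clusters

namespace IsSplit

variable {T} {C₁ C₂ : Set V}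

lemma symm (hs : T.IsSplit C₁ C₂) : T.IsSplit C₂ C₁ :=
  ⟨hs.right_mem, hs.left_mem, hs.disjoint.symm, Set.union_comm C₁ C₂ ▸ hs.union_mem⟩

lemma subset_left (hs : T.IsSplit C₁ C₂) {K : Set V} (hK : K ∈ T.clusters) {x z : V}
    (hxK : x ∈ K) (hx : x ∈ C₁) (hz : z ∈ C₂) (hzK : z ∉ K) : K ⊆ C₁ := by
  have hKP : K ⊆ C₁ ∪ C₂ :=
    (T.subset_or_subset_of_mem hK hs.union_mem hxK (Or.inl hx)).resolve_right
      fun h => hzK (h (Or.inr hz))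
  exact fun k hk => (hKP hk).resolve_right fun hk₂ => hzK <|
    T.union_subset_of_mem_of_mem hK hs.left_mem hs.right_mem hs.disjoint hxK hx hk hk₂ (Or.inr hz)

variable [Finite V]

lemma union_subset_lca (hs : T.IsSplit C₁ C₂) {z y : V} (hz : z ∈ C₂) (hy : y ∉ C₂) :
    C₁ ∪ C₂ ⊆ T.lca z y := by
  rcases T.subset_or_subset_of_mem hs.union_mem (T.lca_mem_clusters z y) (Or.inr hz)
    (T.left_mem_lca z y) with h | h
  · exact h
  · exact T.union_subset_of_mem_of_mem (T.lca_mem_clusters z y) hs.left_mem hs.right_mem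
      hs.disjoint (T.right_mem_lca z y) ((h (T.right_mem_lca z y)).resolve_right hy)
      (T.left_mem_lca z y) hz

lemma lca_eq (hs : T.IsSplit C₁ C₂) {u v : V} (hu : u ∈ C₁) (hv : v ∈ C₂) :
    T.lca u v = C₁ ∪ C₂ :=
  (T.lca_subset hs.union_mem (Or.inl hu) (Or.inr hv)).antisymm <| T.lca_comm u v ▸
    hs.union_subset_lca hv (Set.disjoint_left.1 hs.disjoint hu)

end IsSplit

lemma IsBinary.exists_isSplit [Finite V] {T : PhyloTree V} (hbin : T.IsBinary) {x z : V}
    (hxz : x ≠ z) :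
    ∃ C₁ C₂, T.IsSplit C₁ C₂ ∧ C₁ ∪ C₂ = T.lca x z ∧ x ∈ C₁ ∧ z ∈ C₂ := by
  obtain ⟨B, hB, D, hD, hdisj, hunion, hBP, hDP⟩ := hbin _ (T.lca_mem_clusters x z)
    ((Set.one_lt_ncard (Set.toFinite _)).2
      ⟨x, T.left_mem_lca x z, z, T.right_mem_lca x z, hxz⟩)
  have hs : T.IsSplit B D := ⟨hB, hD, hdisj, hunion ▸ T.lca_mem_clusters x z⟩
  have hx : x ∈ B ∪ D := hunion ▸ T.left_mem_lca x z
  have hz : z ∈ B ∪ D := hunion ▸ T.right_mem_lca x z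
  rcases hx with hxB | hxD
  · refine ⟨B, D, hs, hunion, hxB, hz.resolve_left fun hzB => ?_⟩
    exact hBP.not_subset (T.lca_subset hB hxB hzB)
  · refine ⟨D, B, hs.symm, Set.union_comm D B ▸ hunion, hxD, hz.resolve_right fun hzD => ?_⟩
    exact hDP.not_subset (T.lca_subset hD hxD hzD)

section Reachable

open Relation

variable [Finite V] {r : V → V → Prop}

lemma setOf_reachable_mem_clusters (x₀ : V)
    (h : ∀ b c, ReflTransGen r x₀ b → r b c → T.lca b c ⊆ {v | ReflTransGen r x₀ v}) :
    {v | ReflTransGen r x₀ v} ∈ T.clusters := by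
  set K := {v | ReflTransGen r x₀ v}
  obtain ⟨A, ⟨hA, hx₀A, hAK⟩, hmax⟩ :=
    (Set.toFinite {A | A ∈ T.clusters ∧ x₀ ∈ A ∧ A ⊆ K}).exists_maximal
      ⟨{x₀}, T.singleton_mem x₀, rfl, Set.singleton_subset_iff.2 ReflTransGen.refl⟩
  suffices hKA : K ⊆ A from hKA.antisymm hAK ▸ hA
  intro v hv
  induction hv with
  | refl => exact hx₀A
  | @tail b c hb hbc ih =>
    rcases T.subset_or_subset_of_mem (T.lca_mem_clusters b c) hA (T.left_mem_lca b c) ih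
      with h' | h'
    · exact h' (T.right_mem_lca b c)
    · exact hmax ⟨T.lca_mem_clusters b c, h' hx₀A, h b c hb hbc⟩ h' (T.right_mem_lca b c)

lemma exists_lca_superset_of_reachable {x₀ y : V} (hy : ReflTransGen r x₀ y) (hne : y ≠ x₀) :
    ∃ p q, ReflTransGen r x₀ p ∧ r p q ∧ {v | ReflTransGen r x₀ v} ⊆ T.lca p q := by
  set F := {X | ∃ p q, ReflTransGen r x₀ p ∧ r p q ∧ x₀ ∈ X ∧ X = T.lca p q}
  have hF : F.Nonempty := by
    obtain ⟨c, hc, -⟩ := hy.cases_head.resolve_left hne.symm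
    exact ⟨_, x₀, c, ReflTransGen.refl, hc, T.left_mem_lca x₀ c, rfl⟩
  obtain ⟨X, ⟨p, q, hp, hpq, hx₀X, rfl⟩, hmax⟩ := (Set.toFinite F).exists_maximal hF
  refine ⟨p, q, hp, hpq, fun v hv => ?_⟩
  induction hv with
  | refl => exact hx₀X
  | @tail b c hb hbc ih =>
    rcases T.subset_or_subset_of_mem (T.lca_mem_clusters b c) (T.lca_mem_clusters p q)
      (T.left_mem_lca b c) ih with h | h
    · exact h (T.right_mem_lca b c)
    · exact hmax ⟨b, c, hb, hbc, h hx₀X, rfl⟩ h (T.right_mem_lca b c)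

end Reachable

end PhyloTree

open PhyloTree Relation

section BestMatch

variable {V Γ : Type*} {Tb : PhyloTree V} {σ : V → Γ}

lemma bestMatch.of_lca_eq {x u v : V} (h : bestMatch Tb σ x u) (hσ : σ v = σ u)
    (hl : Tb.lca x v = Tb.lca x u) : bestMatch Tb σ x v :=
  ⟨hσ ▸ h.1, fun y hy => hl ▸ h.2 y (hy.trans hσ)⟩

variable [Finite V]

lemma exists_bestMatch {x y : V} (h : σ x ≠ σ y) : ∃ u, σ u = σ y ∧ bestMatch Tb σ x u := by
  obtain ⟨u, hu, hmin⟩ := (Set.toFinite {v | σ v = σ y}).exists_minimalFor (Tb.lca x) _ ⟨y, rfl⟩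
  refine ⟨u, hu, hu ▸ h, fun y' hy' => ?_⟩
  exact (Tb.subset_or_subset_of_mem (Tb.lca_mem_clusters x u) (Tb.lca_mem_clusters x y')
    (Tb.left_mem_lca x u) (Tb.left_mem_lca x y')).elim id (hmin (hy'.trans hu))

lemma bestMatch.mem_of_mem {x u y : V} (h : bestMatch Tb σ x u) {C : Set V}
    (hC : C ∈ Tb.clusters) (hx : x ∈ C) (hy : y ∈ C) (hσ : σ y = σ u) : u ∈ C :=
  Tb.lca_subset hC hx hy (h.2 y hσ (Tb.right_mem_lca x u))

lemma exists_bestMatch_mem {C : Set V} (hC : C ∈ Tb.clusters) {x y : V} (hx : x ∈ C)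
    (hy : y ∈ C) (h : σ x ≠ σ y) : ∃ u ∈ C, σ u = σ y ∧ bestMatch Tb σ x u := by
  obtain ⟨u, hu, hbm⟩ := exists_bestMatch (Tb := Tb) h
  exact ⟨u, hbm.mem_of_mem hC hx hy hu.symm, hu, hbm⟩

lemma bestMatch_iff_of_isSplit {C₁ C₂ : Set V} (hs : Tb.IsSplit C₁ C₂) {z u : V}
    (hz : z ∈ C₂) (hu : u ∈ C₁) :
    bestMatch Tb σ z u ↔ σ z ≠ σ u ∧ ∀ y ∈ C₂, σ y ≠ σ u := by
  have hlca : Tb.lca z u = C₁ ∪ C₂ := Tb.lca_comm z u ▸ hs.lca_eq hu hz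
  refine ⟨fun h => ⟨h.1, fun y hy hσ => ?_⟩, fun ⟨hσ, h⟩ => ⟨hσ, fun y hy => ?_⟩⟩
  · have hsub : Tb.lca z u ⊆ C₂ := (h.2 y hσ).trans (Tb.lca_subset hs.right_mem hz hy)
    exact Set.disjoint_left.1 hs.disjoint hu (hsub (Tb.right_mem_lca z u))
  · exact hlca ▸ hs.union_subset_lca hz fun hy₂ => h y hy₂ hy

end BestMatch

section Rbin

variable {V Γ : Type*} {E : V → V → Prop} {σ : V → Γ}

lemma mem_Rbin_of_forbidden {a b b' : V} (h : (a, b, b') ∈ forbiddenTriples E σ) :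
    (b, b', a) ∈ Rbin E σ :=
  Or.inr h

lemma ne_of_mem_Rbin {x y z : V} (h : (x, y, z) ∈ Rbin E σ) : x ≠ y := by
  rcases h with h | h
  · exact fun hxy => h.1 (congrArg σ hxy)
  · exact h.2.2.1

lemma mem_Rbin_of_notMem [Finite V] {Tb : PhyloTree V} (hE : Explains Tb σ E) {C : Set V}
    (hC : C ∈ Tb.clusters) {u v w : V} (hu : u ∈ C) (hv : v ∈ C) (huv : E u v)
    (hσ : σ w = σ v) (hw : w ∉ C) : (u, v, w) ∈ Rbin E σ :=
  Or.inl ⟨((hE u v).1 huv).1, hσ.symm, huv,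
    fun h => hw (((hE u w).1 h).mem_of_mem hC hu hv hσ.symm)⟩

end Rbin

section AhoGraph

variable {V : Type*} {R : Set (V × V × V)} {L : Set V}

lemma ahoAdj.symm {x y : V} (h : ahoAdj R L x y) : ahoAdj R L y x :=
  let ⟨hx, hy, z, hz, h⟩ := h
  ⟨hy, hx, z, hz, h.symm⟩

lemma ahoAdj_of_mem {x y z : V} (hx : x ∈ L) (hy : y ∈ L) (hz : z ∈ L) (h : (x, y, z) ∈ R) :
    ahoAdj R L x y :=
  ⟨hx, hy, z, hz, Or.inl h⟩

lemma mem_ahoComponent_self {x : V} : x ∈ ahoComponent R L x :=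
  ReflTransGen.refl

lemma ahoComponent_subset {x : V} (hx : x ∈ L) : ahoComponent R L x ⊆ L := by
  intro y hy
  induction hy with
  | refl => exact hx
  | tail _ h _ => exact h.2.1

lemma ahoComponent_mono {L' : Set V} (h : L ⊆ L') (x : V) :
    ahoComponent R L x ⊆ ahoComponent R L' x :=
  fun v hv => ReflTransGen.mono (fun a b (hab : ahoAdj R L a b) =>
    let ⟨ha, hb, z, hz, hab⟩ := hab
    (⟨h ha, h hb, z, h hz, hab⟩ : ahoAdj R L' a b)) x v hv

lemma ahoComponent_eq_of_mem {x y : V} (hy : y ∈ ahoComponent R L x) :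
    ahoComponent R L y = ahoComponent R L x := by
  have hyx : ReflTransGen (ahoAdj R L) y x := by
    induction hy with
    | refl => exact ReflTransGen.refl
    | tail _ hbc ih => exact ih.head hbc.symm
  ext w
  exact ⟨fun hw => hy.trans hw, fun hw => hyx.trans hw⟩

end AhoGraph

section AhoTree

variable {V : Type*} {R : Set (V × V × V)} {T : PhyloTree V}

lemma IsAhoTree.mem_clusters_iff (hT : IsAhoTree R T) {A : Set V} :
    A ∈ T.clusters ↔ IsAhoCluster R A := by
  rw [hT]; rfl

lemma IsAhoTree.not_ssubset (hT : IsAhoTree R T) {N : Set V} (hN : IsAhoCluster R N)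
    (hconn : ∀ x ∈ N, ahoComponent R N x = N) {A : Set V} (hA : IsAhoCluster R A) : ¬ A ⊂ N := by
  induction hA with
  | univ => exact fun h => h.not_subset (Set.subset_univ N)
  | @component L x hL hx ih =>
    intro hsub
    have hxN : x ∈ N := hsub.subset mem_ahoComponent_self
    rcases T.nested L (hT.mem_clusters_iff.2 hL) N (hT.mem_clusters_iff.2 hN) with h | h | h
    · rcases h.eq_or_ssubset with rfl | h
      · exact hsub.ne (hconn x hxN)
      · exact ih h
    · exact hsub.not_subset ((hconn x hxN).symm.subset.trans (ahoComponent_mono h x))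
    · exact Set.disjoint_left.1 h hx hxN

lemma IsAhoTree.displaysSet [Finite V] (hT : IsAhoTree R T)
    (hR : ∀ x y z, (x, y, z) ∈ R → x ≠ y) : T.DisplaysSet R := by
  rintro ⟨x, y, z⟩ ht
  refine T.displays_iff.2 ⟨hR x y z ht, fun hz => ?_⟩
  set N := T.lca x y
  have hN : IsAhoCluster R N := hT.mem_clusters_iff.1 (T.lca_mem_clusters x y)
  have hK : ahoComponent R N x ∈ T.clusters :=
    hT.mem_clusters_iff.2 (IsAhoCluster.component hN (T.left_mem_lca x y))
  have hy : y ∈ ahoComponent R N x :=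
    ReflTransGen.single (ahoAdj_of_mem (T.left_mem_lca x y) (T.right_mem_lca x y) hz ht)
  have hKN : ahoComponent R N x = N :=
    (ahoComponent_subset (T.left_mem_lca x y)).antisymm
      (T.lca_subset hK mem_ahoComponent_self hy)
  refine hT.not_ssubset hN (fun x' hx' => (ahoComponent_eq_of_mem (by rwa [hKN])).trans hKN)
    (hT.mem_clusters_iff.1 (T.singleton_mem y)) ?_
  refine Set.ssubset_iff_subset_ne.2 ⟨Set.singleton_subset_iff.2 (T.right_mem_lca x y), ?_⟩
  exact fun h => hR x y z ht (Set.mem_singleton_iff.1 (h ▸ T.left_mem_lca x y))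

end AhoTree

section Explained

variable {V Γ : Type*} [Finite V] {E : V → V → Prop} {σ : V → Γ} {Tb : PhyloTree V}

lemma exists_ahoAdj_mem (hE : Explains Tb σ E) {C L : Set V} (hC : C ∈ Tb.clusters)
    (hCL : C ⊆ L) {u y o : V} (hu : u ∈ C) (hy : y ∈ C) (ho : o ∈ L) (hoC : o ∉ C)
    (hσo : σ o = σ y) (hσu : σ u ≠ σ y) :
    ∃ v ∈ C, σ v = σ y ∧ ahoAdj (Rbin E σ) L u v := by
  obtain ⟨v, hv, hσv, hbm⟩ := exists_bestMatch_mem hC hu hy hσu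
  exact ⟨v, hv, hσv, ahoAdj_of_mem (hCL hu) (hCL hv) ho
    (mem_Rbin_of_notMem hE hC hu hv ((hE u v).2 hbm) (hσo.trans hσv.symm) hoC)⟩

lemma subset_ahoComponent_of_informative (hE : Explains Tb σ E) {L A₁ A₂ : Set V}
    (hs : Tb.IsSplit A₁ A₂) (hL : A₁ ∪ A₂ ⊆ L) {y y' w : V} (hy : y ∈ A₁) (hy' : y' ∈ A₂)
    (hw : w ∈ L) (ht : (y, y', w) ∈ informativeTriples E σ) :
    A₁ ∪ A₂ ⊆ ahoComponent (Rbin E σ) L y := by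
  obtain ⟨hσ, hσw, hyy', hyw⟩ := ht
  have hnoc : ∀ v ∈ A₁, σ v ≠ σ y' :=
    ((bestMatch_iff_of_isSplit hs.symm hy hy').1 ((hE y y').1 hyy')).2
  have hwA : w ∉ A₁ ∪ A₂ := by
    rintro (hw₁ | hw₂)
    · exact hnoc w hw₁ hσw.symm
    · exact hyw ((hE y w).2 ((bestMatch_iff_of_isSplit hs.symm hy hw₂).2
        ⟨hσw ▸ hσ, hσw ▸ hnoc⟩))
  have hadj : ∀ u ∈ A₁, ∀ v ∈ A₂, σ v = σ y' → ahoAdj (Rbin E σ) L u v := by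
    intro u hu v hv hσv
    have huv : E u v := (hE u v).2 ((bestMatch_iff_of_isSplit hs.symm hu hv).2
      ⟨fun h => hnoc u hu (h.trans hσv), hσv ▸ hnoc⟩)
    exact ahoAdj_of_mem (hL (Or.inl hu)) (hL (Or.inr hv)) hw
      (mem_Rbin_of_notMem hE hs.union_mem (Or.inl hu) (Or.inr hv) huv
        (hσw.symm.trans hσv.symm) hwA)
  rintro v (hv₁ | hv₂)
  · exact (ReflTransGen.single (hadj y hy y' hy' rfl)).tail (hadj v hv₁ y' hy' rfl).symm
  · by_cases hσv : σ v = σ y'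
    · exact ReflTransGen.single (hadj y hy v hv₂ hσv)
    · obtain ⟨v', hv', hσv', hvv'⟩ := exists_ahoAdj_mem hE hs.right_mem
        (Set.subset_union_right.trans hL) hv₂ hy' hw (fun h => hwA (Or.inr h)) hσw.symm hσv
      exact (ReflTransGen.single (hadj y hy v' hv' hσv')).tail hvv'.symm

lemma subset_ahoComponent_of_forbidden (hE : Explains Tb σ E) {L A₁ A₂ : Set V}
    (hs : Tb.IsSplit A₁ A₂) (hL : A₁ ∪ A₂ ⊆ L) {y y' w : V} (hy : y ∈ A₁) (hy' : y' ∈ A₂)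
    (hw : w ∈ L) (ht : (w, y, y') ∈ forbiddenTriples E σ) :
    A₁ ∪ A₂ ⊆ ahoComponent (Rbin E σ) L y := by
  obtain ⟨hσ, hσy, -, hwy, hwy'⟩ := ht
  have hwA : w ∉ A₁ ∪ A₂ := by
    rintro (hw₁ | hw₂)
    · exact ((bestMatch_iff_of_isSplit hs.symm hw₁ hy').1 ((hE w y').1 hwy')).2 y hy hσy
    · exact ((bestMatch_iff_of_isSplit hs hw₂ hy).1 ((hE w y).1 hwy)).2 y' hy' hσy.symm
  -- all leaves of `A₁ ∪ A₂` coloured like `y` are best matches of `w`, hence pairwise adjacent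
  have hcol : ∀ v ∈ A₁ ∪ A₂, σ v = σ y → v ∈ ahoComponent (Rbin E σ) L y := by
    intro v hv hσv
    rcases eq_or_ne y v with rfl | hne
    · exact mem_ahoComponent_self
    have hwv : E w v := (hE w v).2 (((hE w y).1 hwy).of_lca_eq hσv
      (Tb.lca_eq_lca_of_notMem hs.union_mem hv (Or.inl hy) hwA))
    exact ReflTransGen.single (ahoAdj_of_mem (hL (Or.inl hy)) (hL hv) hw
      (mem_Rbin_of_forbidden ⟨hσ, hσv.symm, hne, hwy, hwv⟩))
  intro v hv
  by_cases hσv : σ v = σ y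
  · exact hcol v hv hσv
  obtain ⟨v', hv', hσv', hvv'⟩ : ∃ v' ∈ A₁ ∪ A₂, σ v' = σ y ∧ ahoAdj (Rbin E σ) L v v' := by
    rcases hv with hv₁ | hv₂
    · obtain ⟨v', hv', hσv', hvv'⟩ := exists_ahoAdj_mem hE hs.left_mem
        (Set.subset_union_left.trans hL) hv₁ hy (hL (Or.inr hy'))
        (Set.disjoint_right.1 hs.disjoint hy') hσy.symm hσv
      exact ⟨v', Or.inl hv', hσv', hvv'⟩
    · obtain ⟨v', hv', hσv', hvv'⟩ := exists_ahoAdj_mem hE hs.right_mem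
        (Set.subset_union_right.trans hL) hv₂ hy' (hL (Or.inl hy))
        (Set.disjoint_left.1 hs.disjoint hy) hσy (hσy ▸ hσv)
      exact ⟨v', Or.inr hv', hσv'.trans hσy.symm, hvv'⟩
  exact (hcol v' hv' hσv').tail hvv'.symm

lemma lca_subset_ahoComponent_of_mem_Rbin (hbin : Tb.IsBinary) (hE : Explains Tb σ E)
    {L : Set V} (hL : L ∈ Tb.clusters) {y y' w : V} (ht : (y, y', w) ∈ Rbin E σ)
    (hy : y ∈ L) (hy' : y' ∈ L) (hw : w ∈ L) :
    Tb.lca y y' ⊆ ahoComponent (Rbin E σ) L y := by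
  obtain ⟨A₁, A₂, hs, hA, hy₁, hy'₂⟩ := hbin.exists_isSplit (ne_of_mem_Rbin ht)
  have hAL : A₁ ∪ A₂ ⊆ L := hA ▸ Tb.lca_subset hL hy hy'
  rw [← hA]
  rcases ht with ht | ht
  · exact subset_ahoComponent_of_informative hE hs hAL hy₁ hy'₂ hw ht
  · exact subset_ahoComponent_of_forbidden hE hs hAL hy₁ hy'₂ hw ht

lemma lca_subset_ahoComponent (hbin : Tb.IsBinary) (hE : Explains Tb σ E) {L : Set V}
    (hL : L ∈ Tb.clusters) {b c : V} (hbc : ahoAdj (Rbin E σ) L b c) :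
    Tb.lca b c ⊆ ahoComponent (Rbin E σ) L b := by
  obtain ⟨hb, hc, w, hw, ht | ht⟩ := hbc
  · exact lca_subset_ahoComponent_of_mem_Rbin hbin hE hL ht hb hc hw
  · have hcb : c ∈ ahoComponent (Rbin E σ) L b := ReflTransGen.single ⟨hb, hc, w, hw, Or.inr ht⟩
    rw [Tb.lca_comm, ← ahoComponent_eq_of_mem hcb]
    exact lca_subset_ahoComponent_of_mem_Rbin hbin hE hL ht hc hb hw

lemma ahoComponent_mem_clusters (hbin : Tb.IsBinary) (hE : Explains Tb σ E) {L : Set V}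
    (hL : L ∈ Tb.clusters) (x₀ : V) : ahoComponent (Rbin E σ) L x₀ ∈ Tb.clusters :=
  Tb.setOf_reachable_mem_clusters x₀ fun b _ hb hbc => by
    show Tb.lca b _ ⊆ ahoComponent (Rbin E σ) L x₀
    rw [← ahoComponent_eq_of_mem hb]
    exact lca_subset_ahoComponent hbin hE hL hbc

variable {T' : PhyloTree V}

lemma color_ne_of_confined (hE : Explains Tb σ E) (hdisp : T'.DisplaysSet (Rbin E σ))
    {C₁ C₂ W : Set V} (hs : Tb.IsSplit C₁ C₂) (hW : W ∈ T'.clusters) {z a : V}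
    (hz : z ∈ C₂) (hzW : z ∈ W) (ha : a ∈ C₁) (haW : a ∈ W)
    (hconf : ∀ v ∈ W, σ v = σ a → v ∈ C₁) : ∀ y ∈ C₂, σ y ≠ σ a := by
  have hza : σ z ≠ σ a := fun h => Set.disjoint_left.1 hs.disjoint (hconf z hzW h) hz
  obtain ⟨v, hσv, hv⟩ := exists_bestMatch (Tb := Tb) hza
  have hv₂ : v ∉ C₂ := by
    intro hv₂
    have hza' : ¬ E z a := fun h =>
      ((bestMatch_iff_of_isSplit hs hz ha).1 ((hE z a).1 h)).2 v hv₂ hσv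
    have ht : (z, v, a) ∈ Rbin E σ := Or.inl ⟨hv.1, hσv, (hE z v).2 hv, hza'⟩
    exact Set.disjoint_left.1 hs.disjoint
      (hconf v ((hdisp _ ht).mem_of_mem hW hzW haW) hσv) hv₂
  exact fun y hy hσy => hv₂ (hv.mem_of_mem hs.right_mem hz hy (hσy.trans hσv.symm))

lemma notMem_lca_of_informative (hE : Explains Tb σ E) (hdisp : T'.DisplaysSet (Rbin E σ))
    {L K C₁ C₂ : Set V} (hs : Tb.IsSplit C₁ C₂) (hKC₁ : K ⊆ C₁)
    (hK : ∀ a ∈ K, ∀ b, ahoAdj (Rbin E σ) L a b → b ∈ K) {p q w z : V} (hp : p ∈ K)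
    (hq : q ∈ K) (hWL : T'.lca p q ⊆ L) (hw : w ∈ L) (ht : (p, q, w) ∈ informativeTriples E σ)
    (hz : z ∈ C₂) : z ∉ T'.lca p q := by
  intro hzW
  obtain ⟨hσpq, hσqw, hpq, hpw⟩ := ht
  have hW := T'.lca_mem_clusters p q
  have hqW := T'.right_mem_lca p q
  have hout : ∀ v, σ v = σ q → ¬ E p v → v ∉ T'.lca p q := by
    intro v hσv hpv
    have ht : (p, q, v) ∈ Rbin E σ := Or.inl ⟨hσpq, hσv.symm, hpq, hpv⟩
    exact (T'.displays_iff.1 (hdisp _ ht)).2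
  have hconf : ∀ v ∈ T'.lca p q, σ v = σ q → v ∈ C₁ := fun v hvW hσv =>
    ((hE p v).1 (not_not.1 fun hpv => hout v hσv hpv hvW)).mem_of_mem hs.left_mem
      (hKC₁ hp) (hKC₁ hq) hσv.symm
  have hno := color_ne_of_confined hE hdisp hs hW hz hzW (hKC₁ hq) hqW hconf
  have hzq : E z q := (hE z q).2 ((bestMatch_iff_of_isSplit hs hz (hKC₁ hq)).2 ⟨hno z hz, hno⟩)
  have hwW : w ∉ T'.lca p q := hout w hσqw.symm hpw
  by_cases hwP : w ∈ C₁ ∪ C₂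
  · have hw₁ : w ∈ C₁ := hwP.resolve_right fun h => hno w h hσqw.symm
    have hzw : E z w := (hE z w).2 ((bestMatch_iff_of_isSplit hs hz hw₁).2
      ⟨hσqw ▸ hno z hz, hσqw ▸ hno⟩)
    have ht : (q, w, z) ∈ Rbin E σ :=
      mem_Rbin_of_forbidden ⟨hno z hz, hσqw, ne_of_mem_of_not_mem hqW hwW, hzq, hzw⟩
    exact hwW ((hdisp _ ht).mem_of_mem hW hqW hzW)
  · have ht : (z, q, w) ∈ Rbin E σ :=
      mem_Rbin_of_notMem hE hs.union_mem (Or.inr hz) (Or.inl (hKC₁ hq)) hzq hσqw.symm hwP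
    exact Set.disjoint_left.1 hs.disjoint
      (hKC₁ (hK q hq z (ahoAdj_of_mem (hWL hzW) (hWL hqW) hw ht).symm)) hz

lemma notMem_lca_of_forbidden (hE : Explains Tb σ E) (hdisp : T'.DisplaysSet (Rbin E σ))
    {L K C₁ C₂ : Set V} (hs : Tb.IsSplit C₁ C₂) (hKC₁ : K ⊆ C₁)
    (hK : ∀ a ∈ K, ∀ b, ahoAdj (Rbin E σ) L a b → b ∈ K) {p q w z : V} (hp : p ∈ K)
    (hq : q ∈ K) (hWL : T'.lca p q ⊆ L) (hw : w ∈ L) (ht : (w, p, q) ∈ forbiddenTriples E σ)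
    (hz : z ∈ C₂) : z ∉ T'.lca p q := by
  intro hzW
  have hW := T'.lca_mem_clusters p q
  have hpW := T'.left_mem_lca p q
  have hwW : w ∉ T'.lca p q := (T'.displays_iff.1 (hdisp _ (mem_Rbin_of_forbidden ht))).2
  obtain ⟨hσwp, hσpq, hpq, hwp, hwq⟩ := ht
  have hconf : ∀ v ∈ T'.lca p q, σ v = σ p → v ∈ C₁ := by
    intro v hvW hσv
    by_cases hwv : E w v
    · rcases eq_or_ne p v with rfl | hpv
      · exact hKC₁ hp
      exact hKC₁ (hK p hp v (ahoAdj_of_mem (hWL hpW) (hWL hvW) hw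
        (mem_Rbin_of_forbidden ⟨hσwp, hσv.symm, hpv, hwp, hwv⟩)))
    · have ht : (w, p, v) ∈ Rbin E σ := Or.inl ⟨hσwp, hσv.symm, hwp, hwv⟩
      exact absurd ((hdisp _ ht).swap.mem_of_mem hW hpW hvW) hwW
  have hno := color_ne_of_confined hE hdisp hs hW hz hzW (hKC₁ hp) hpW hconf
  have hzp : E z p := (hE z p).2 ((bestMatch_iff_of_isSplit hs hz (hKC₁ hp)).2 ⟨hno z hz, hno⟩)
  have hzq : E z q := (hE z q).2 ((bestMatch_iff_of_isSplit hs hz (hKC₁ hq)).2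
    ⟨hσpq ▸ hno z hz, hσpq ▸ hno⟩)
  exact (T'.displays_iff.1 (hdisp _ (mem_Rbin_of_forbidden
    ⟨hno z hz, hσpq, hpq, hzp, hzq⟩))).2 hzW

lemma notMem_lca_of_mem_Rbin (hE : Explains Tb σ E) (hdisp : T'.DisplaysSet (Rbin E σ))
    {L K C₁ C₂ : Set V} (hs : Tb.IsSplit C₁ C₂) (hKC₁ : K ⊆ C₁)
    (hK : ∀ a ∈ K, ∀ b, ahoAdj (Rbin E σ) L a b → b ∈ K) {p q w z : V} (hp : p ∈ K)
    (hq : q ∈ K) (hWL : T'.lca p q ⊆ L) (hw : w ∈ L) (ht : (p, q, w) ∈ Rbin E σ)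
    (hz : z ∈ C₂) : z ∉ T'.lca p q := by
  rcases ht with ht | ht
  · exact notMem_lca_of_informative hE hdisp hs hKC₁ hK hp hq hWL hw ht hz
  · exact notMem_lca_of_forbidden hE hdisp hs hKC₁ hK hp hq hWL hw ht hz

lemma ahoComponent_mem_clusters_of_displays (hbin : Tb.IsBinary) (hE : Explains Tb σ E)
    (hdisp : T'.DisplaysSet (Rbin E σ)) {L : Set V} (hL : L ∈ T'.clusters) {x₀ : V}
    (hKTb : ahoComponent (Rbin E σ) L x₀ ∈ Tb.clusters) :
    ahoComponent (Rbin E σ) L x₀ ∈ T'.clusters := by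
  set K := ahoComponent (Rbin E σ) L x₀
  by_cases hK : K = {x₀}
  · exact hK ▸ T'.singleton_mem x₀
  obtain ⟨y, hy, hyx⟩ : ∃ y ∈ K, y ≠ x₀ := by
    by_contra! h
    exact hK (Set.eq_singleton_iff_unique_mem.2 ⟨mem_ahoComponent_self, h⟩)
  obtain ⟨p, q, hp, hpq, hKW⟩ := T'.exists_lca_superset_of_reachable hy hyx
  have hq : q ∈ K := hp.tail hpq
  have hclosed : ∀ a ∈ K, ∀ b, ahoAdj (Rbin E σ) L a b → b ∈ K := fun a ha b hab =>
    ReflTransGen.tail ha hab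
  suffices hWK : T'.lca p q ⊆ K from hWK.antisymm hKW ▸ T'.lca_mem_clusters p q
  intro z hzW
  by_contra hzK
  obtain ⟨C₁, C₂, hs, -, hx₁, hz₂⟩ :=
    hbin.exists_isSplit (ne_of_mem_of_not_mem mem_ahoComponent_self hzK)
  have hKC₁ := hs.subset_left hKTb mem_ahoComponent_self hx₁ hz₂ hzK
  obtain ⟨hpL, hqL, w, hw, ht | ht⟩ := hpq
  · exact notMem_lca_of_mem_Rbin hE hdisp hs hKC₁ hclosed hp hq
      (T'.lca_subset hL hpL hqL) hw ht hz₂ hzW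
  · rw [T'.lca_comm] at hzW
    exact notMem_lca_of_mem_Rbin hE hdisp hs hKC₁ hclosed hq hp
      (T'.lca_subset hL hqL hpL) hw ht hz₂ hzW

lemma IsAhoCluster.mem_clusters (hbin : Tb.IsBinary) (hE : Explains Tb σ E) {A : Set V}
    (hA : IsAhoCluster (Rbin E σ) A) :
    A ∈ Tb.clusters ∧ ∀ T' : PhyloTree V, T'.DisplaysSet (Rbin E σ) → A ∈ T'.clusters := by
  induction hA with
  | univ => exact ⟨Tb.univ_mem, fun T' _ => T'.univ_mem⟩
  | @component L x _ _ ih =>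
    have hK := ahoComponent_mem_clusters hbin hE ih.1 x
    exact ⟨hK, fun T' hT' => ahoComponent_mem_clusters_of_displays hbin hE hT' (ih.2 T' hT') hK⟩

end Explained

/-- Lemma: BRT-closure.
The binary-refinable tree `(T,σ)` of a binary-explainable BMG `(G,σ)` (i.e. the Aho
tree of `R^bin(G,σ)`) satisfies `r(T) = cl(R^bin(G,σ))`: the set of triples displayed
by the BRT is exactly the closure of the extended triple set. -/
theorem stmt9 {V Γ : Type*} [Fintype V] (E : V → V → Prop) (σ : V → Γ)
    (hbe : BinaryExplainable E σ)
    (T : PhyloTree V) (hT : IsAhoTree (Rbin E σ) T) :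
    T.triples = tripleClosure (Rbin E σ) := by
  obtain ⟨Tb, hbin, hE⟩ := hbe
  ext ⟨x, y, z⟩
  refine ⟨fun h T' hT' => ?_, fun h => h T (hT.displaysSet fun _ _ _ => ne_of_mem_Rbin)⟩
  obtain ⟨hxy, hz⟩ := T.displays_iff.1 h
  have hN : T.lca x y ∈ T'.clusters :=
    ((hT.mem_clusters_iff.1 (T.lca_mem_clusters x y)).mem_clusters hbin hE).2 T' hT'
  exact T'.displays_iff.2 ⟨hxy, fun hz' =>
    hz (T'.lca_subset hN (T.left_mem_lca x y) (T.right_mem_lca x y) hz')⟩
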